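/- arXiv:1102.3079 — 6 statements merged into one kernel-verified Lean document; each statement's English description precedes it below -/
import Mathlib

section
/- For every x ∈ [l, l+1), the series ∑_{i=1}^∞ x_i / (-β)^i converges to x, where x_i = ⌊-β T^{i-1}(x) - l⌋. -/
/-!
Since `T y = -β y - d` with `d` the digit of `y`, each term `x_{i+1} / (-β)^(i+1)` equals
`T^i x / (-β)^i - T^(i+1) x / (-β)^(i+1)`, so the series telescopes to `T^0 x = x`. The orbit
`T^n x` is bounded, so `T^n x / (-β)^n` is dominated by a convergent geometric series, which makes
the telescoping legitimate.
-/

/-- The `(-β,l)`-transformation. -/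
noncomputable def negBetaT (β l x : ℝ) : ℝ := -β * x - ⌊-β * x - l⌋

/-- The `i`-th digit (0-indexed: `negBetaDigit β l x i` is the digit `x_{i+1}`). -/
noncomputable def negBetaDigit (β l x : ℝ) (i : ℕ) : ℤ :=
  ⌊-β * ((negBetaT β l)^[i] x) - l⌋

theorem Summable.hasSum_sub_succ {G : Type*} [AddCommGroup G] [TopologicalSpace G]
    [IsTopologicalAddGroup G] {g : ℕ → G} (hg : Summable g) :
    HasSum (fun n => g n - g (n + 1)) (g 0) := by
  simpa using hg.hasSum.sub ((hasSum_nat_add_iff' 1).mpr hg.hasSum)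

theorem summable_div_pow_of_abs_le {r : ℕ → ℝ} {c C : ℝ} (hc : 1 < |c|) (hr : ∀ n, |r n| ≤ C) :
    Summable fun n => r n / c ^ n := by
  have hc₀ : 0 < |c| := one_pos.trans hc
  have hgeom : Summable fun n => C * |c|⁻¹ ^ n :=
    (summable_geometric_of_lt_one (by positivity) (inv_lt_one_of_one_lt₀ hc)).mul_left C
  refine hgeom.of_norm_bounded fun n => ?_
  simp only [norm_div, norm_pow, Real.norm_eq_abs, inv_pow, ← div_eq_mul_inv]
  gcongr
  exact hr n

theorem negBetaT_mem_Ico (β l y : ℝ) : negBetaT β l y ∈ Set.Ico l (l + 1) := by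
  have h₁ : (⌊-β * y - l⌋ : ℝ) ≤ -β * y - l := Int.floor_le _
  have h₂ : -β * y - l - 1 < ⌊-β * y - l⌋ := Int.sub_one_lt_floor _
  unfold negBetaT
  constructor <;> linarith

theorem abs_negBetaT_iterate_le (β l x : ℝ) (n : ℕ) :
    |(negBetaT β l)^[n] x| ≤ max |x| (|l| + 1) := by
  cases n with
  | zero => exact le_max_left _ _
  | succ n =>
    rw [Function.iterate_succ_apply']
    obtain ⟨hlo, hhi⟩ := negBetaT_mem_Ico β l ((negBetaT β l)^[n] x)
    refine le_max_of_le_right (abs_le.mpr ⟨?_, ?_⟩) <;>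
      linarith [neg_abs_le l, le_abs_self l]

theorem negBetaT_iterate_succ (β l x : ℝ) (i : ℕ) :
    (negBetaT β l)^[i + 1] x = -β * (negBetaT β l)^[i] x - negBetaDigit β l x i := by
  rw [Function.iterate_succ_apply']
  rfl

theorem negBetaDigit_div_pow_eq {β : ℝ} (hβ : β ≠ 0) (l x : ℝ) (i : ℕ) :
    (negBetaDigit β l x i : ℝ) / (-β) ^ (i + 1) =
      (negBetaT β l)^[i] x / (-β) ^ i - (negBetaT β l)^[i + 1] x / (-β) ^ (i + 1) := by
  have : -β ≠ 0 := neg_ne_zero.mpr hβ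
  rw [negBetaT_iterate_succ]
  field_simp
  ring

theorem stmt_1_general (β l : ℝ) (hβ : 1 < β)
    (x : ℝ) :
    HasSum (fun i : ℕ => (negBetaDigit β l x i : ℝ) / (-β) ^ (i + 1)) x := by
  have hβ₀ : β ≠ 0 := by positivity
  have habs : 1 < |-β| := by rwa [abs_neg, abs_of_pos (by positivity)]
  have hsum : Summable fun n => (negBetaT β l)^[n] x / (-β) ^ n :=
    summable_div_pow_of_abs_le habs (abs_negBetaT_iterate_le β l x)
  simpa only [negBetaDigit_div_pow_eq hβ₀, Function.iterate_zero_apply, pow_zero, div_one]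
    using hsum.hasSum_sub_succ

theorem stmt_1 (β l : ℝ) (hβ : 1 < β) (hl₁ : -1 < l) (hl₂ : l ≤ 0)
    (x : ℝ) (hx : x ∈ Set.Ico l (l + 1)) :
    HasSum (fun i : ℕ => (negBetaDigit β l x i : ℝ) / (-β) ^ (i + 1)) x :=
  stmt_1_general β l hβ x
end

section
/- The implication (x ∈ [l, l+1) ⟹ x/(-β) ∈ [l, l+1)) holds for all x if and only if -β/(β+1) < l ≤ -1/(β+1). -/
/-! The map `x ↦ x / (-β)` reverses order, so it sends `[l, l + 1)` onto `(-(l + 1)/β, -l/β]`;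
this lies in `[l, l + 1)` exactly when `l ≤ -(l + 1)/β` and `-l/β < l + 1`. -/

open Set

theorem mapsTo_div_Ico_iff_of_neg {K : Type*} [Field K] [LinearOrder K] [IsStrictOrderedRing K]
    {a b c d γ : K} (hγ : γ < 0) (hab : a < b) :
    MapsTo (· / γ) (Ico a b) (Ico c d) ↔ c ≤ b / γ ∧ a / γ < d := by
  rw [← Ici_inter_Iio (a := c), mapsTo_inter]
  refine and_congr ?_ ⟨fun h ↦ h (left_mem_Ico.2 hab), fun h x hx ↦ ?_⟩
  · simp only [MapsTo, mem_Ici, le_div_iff_of_neg hγ]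
    exact (isLUB_le_iff (isLUB_Ico hab)).symm
  · exact (div_le_div_of_nonpos_of_le hγ.le hx.1).trans_lt h

theorem stmt_5_general (β l : ℝ) (hβ : 1 < β) :
    (∀ x : ℝ, x ∈ Set.Ico l (l + 1) → x / (-β) ∈ Set.Ico l (l + 1)) ↔
      (-β / (β + 1) < l ∧ l ≤ -1 / (β + 1)) := by
  have hβ₀ : -β < 0 := by linarith
  have hβ₁ : 0 < β + 1 := by linarith
  rw [← MapsTo, mapsTo_div_Ico_iff_of_neg hβ₀ (lt_add_one l), and_comm, le_div_iff_of_neg hβ₀,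
    div_lt_iff_of_neg hβ₀, div_lt_iff₀ hβ₁, le_div_iff₀ hβ₁]
  constructor <;> rintro ⟨h₁, h₂⟩ <;> constructor <;> linarith

theorem stmt_5 (β l : ℝ) (hβ : 1 < β) (hl₁ : -1 < l) (hl₂ : l ≤ 0) :
    (∀ x : ℝ, x ∈ Set.Ico l (l + 1) → x / (-β) ∈ Set.Ico l (l + 1)) ↔
      (-β / (β + 1) < l ∧ l ≤ -1 / (β + 1)) :=
  stmt_5_general β l hβ
end

section
/- There exists a nonzero x ∈ [l, l+1) with T^n(x) = 0 for some n ∈ ℕ if and only if 1/β ∈ [l, l+1) or -1/β ∈ [l, l+1). -/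
open Set

theorem Function.exists_iterate_ne_and_apply_iterate_eq {α : Type*} (f : α → α) {a x : α}
    (hx : x ≠ a) {n : ℕ} (hn : f^[n] x = a) : ∃ m, f^[m] x ≠ a ∧ f (f^[m] x) = a := by
  induction n generalizing x with
  | zero => exact absurd hn hx
  | succ n ih =>
    by_cases hfx : f x = a
    · exact ⟨0, hx, hfx⟩
    · obtain ⟨m, hm⟩ := ih hfx hn
      exact ⟨m + 1, hm⟩

section NegBetaTransformation

variable {β l : ℝ}

theorem negBetaT_eq_fract_add (β l x : ℝ) : negBetaT β l x = Int.fract (-β * x - l) + l := by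
  rw [negBetaT, Int.fract]
  ring

theorem mapsTo_negBetaT (β l : ℝ) : MapsTo (negBetaT β l) (Ico l (l + 1)) (Ico l (l + 1)) :=
  fun x _ => by
    rw [negBetaT_eq_fract_add]
    constructor <;> linarith [Int.fract_nonneg (-β * x - l), Int.fract_lt_one (-β * x - l)]

theorem negBetaT_eq_zero_iff (hl₁ : -1 < l) (hl₂ : l ≤ 0) {x : ℝ} :
    negBetaT β l x = 0 ↔ ∃ m : ℤ, -β * x = m := by
  refine ⟨fun h => ⟨⌊-β * x - l⌋, by rw [negBetaT] at h; linarith⟩, ?_⟩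
  rintro ⟨m, hm⟩
  have hfloor : ⌊-l⌋ = 0 := Int.floor_eq_zero_iff.2 ⟨by linarith, by linarith⟩
  rw [negBetaT, hm, sub_eq_add_neg (m : ℝ) l, Int.floor_intCast_add, hfloor]
  simp

theorem one_div_mem_or_neg_one_div_mem (hβ : 0 < β) (hl₁ : -1 < l) (hl₂ : l ≤ 0) {y : ℝ}
    (hy : y ∈ Ico l (l + 1)) (hy0 : y ≠ 0) {m : ℤ} (hm : -β * y = m) :
    1 / β ∈ Ico l (l + 1) ∨ -1 / β ∈ Ico l (l + 1) := by
  have hm0 : m ≠ 0 := by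
    rintro rfl
    exact hy0 (by simpa [hβ.ne'] using hm)
  have hinv : 0 < 1 / β := by positivity
  rcases hm0.lt_or_gt with hneg | hpos
  · have hle : 1 / β ≤ y := by
      rw [div_le_iff₀ hβ]
      linarith [show (m : ℝ) ≤ -1 by exact_mod_cast Int.le_sub_one_of_lt hneg]
    exact Or.inl ⟨by linarith, by linarith [hy.2]⟩
  · have hle : y ≤ -1 / β := by
      rw [le_div_iff₀ hβ]
      linarith [show (1 : ℝ) ≤ m by exact_mod_cast hpos]
    exact Or.inr ⟨by linarith [hy.1], by rw [neg_div]; linarith⟩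

end NegBetaTransformation

theorem stmt_8 (β l : ℝ) (hβ : 1 < β) (hl₁ : -1 < l) (hl₂ : l ≤ 0) :
    (∃ x ∈ Set.Ico l (l + 1), x ≠ 0 ∧ ∃ n : ℕ, (negBetaT β l)^[n] x = 0) ↔
      (1 / β ∈ Set.Ico l (l + 1) ∨ -1 / β ∈ Set.Ico l (l + 1)) := by
  have hβ0 : 0 < β := zero_lt_one.trans hβ
  constructor
  · rintro ⟨x, hx, hx0, n, hn⟩
    obtain ⟨k, hk0, hk⟩ := Function.exists_iterate_ne_and_apply_iterate_eq _ hx0 hn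
    obtain ⟨m, hm⟩ := (negBetaT_eq_zero_iff hl₁ hl₂).1 hk
    exact one_div_mem_or_neg_one_div_mem hβ0 hl₁ hl₂ ((mapsTo_negBetaT β l).iterate k hx) hk0 hm
  · rintro (h | h)
    · exact ⟨1 / β, h, by positivity, 1,
        (negBetaT_eq_zero_iff hl₁ hl₂).2 ⟨-1, by field_simp; norm_num⟩⟩
    · exact ⟨-1 / β, h, by simp [hβ0.ne'], 1,
        (negBetaT_eq_zero_iff hl₁ hl₂).2 ⟨1, by field_simp; norm_num⟩⟩
end

section
/- An integer sequence (x_i)_{i≥1} is the (-β,l)-expansion of some x ∈ [l, l+1) if and only if for every i ≥ 1, d(l) ⪯_alt (x_i, x_{i+1}, ...) ≺_alt d*(r), where d(l) is the (-β,l)-expansion of l and d*(r) = lim_{ε→0+} d(l+1-ε) in the product topology. -/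
def AltLt (u v : ℕ → ℤ) : Prop :=
  ∃ m : ℕ, (∀ k < m, u k = v k) ∧ (-1 : ℤ) ^ (m + 1) * (v m - u m) > 0

def AltLe (u v : ℕ → ℤ) : Prop := AltLt u v ∨ u = v

/-!
A digit sequence `w` is read back as `∑ wⱼ (-1/β)^{j+1}`, and the expansion of `x` has value `x`.
As long as the digits of `x < y` agree, `T` multiplies `y - x` by `-β`; at the first disagreement
the sign of `(-β)^m (y - x)` decides the order, so `x ↦ d(x)` is strictly increasing for `≺_alt`.
Necessity follows: the shifts of `d(x)` are the expansions `d(Tⁱ x)`, which lie between `d(l)`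
and the expansions of points close to `l + 1`, whose prefixes are those of `d*(r)`.

For sufficiency let `Yₙ` be the value of the `n`-th shift of `(xᵢ)`. Comparing it with `d(l)` and
with some `d(y)`, `y < l + 1`, at the first disagreement shows: if every `Yₙ` lies within `t` of
`[l, l + 1]`, then every `Yₙ` lies within `t / β`. Hence all `Yₙ ∈ [l, l + 1)`, and then
`Yₙ₊₁ = T Yₙ` with digit `xₙ`.
-/

open Filter Topology Set

namespace NegBeta

def AltLtAt (u v : ℕ → ℤ) (m : ℕ) : Prop :=
  (∀ k < m, u k = v k) ∧ (-1 : ℤ) ^ (m + 1) * (v m - u m) > 0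

section AltOrder

variable {u v w : ℕ → ℤ} {m n : ℕ}

theorem AltLtAt.trans (h : AltLtAt u v m) (h' : AltLtAt v w n) : AltLtAt u w (min m n) := by
  obtain ⟨hagree, hsign⟩ := h
  obtain ⟨hagree', hsign'⟩ := h'
  rcases lt_trichotomy m n with hmn | rfl | hnm
  · rw [min_eq_left hmn.le]
    refine ⟨fun k hk => (hagree k hk).trans (hagree' k (hk.trans hmn)), ?_⟩
    rwa [← hagree' m hmn]
  · rw [min_self]
    refine ⟨fun k hk => (hagree k hk).trans (hagree' k hk), ?_⟩
    linarith [show (-1 : ℤ) ^ (m + 1) * (w m - u m) =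
      (-1) ^ (m + 1) * (w m - v m) + (-1) ^ (m + 1) * (v m - u m) by ring]
  · rw [min_eq_right hnm.le]
    refine ⟨fun k hk => (hagree k (hk.trans hnm)).trans (hagree' k hk), ?_⟩
    rwa [hagree n hnm]

theorem AltLtAt.congr_right (h : AltLtAt u v m) (hvw : ∀ k ≤ m, v k = w k) : AltLtAt u w m :=
  ⟨fun k hk => (h.1 k hk).trans (hvw k hk.le), by rw [← hvw m le_rfl]; exact h.2⟩

theorem AltLtAt.apply_zero_le (h : AltLtAt u v m) : v 0 ≤ u 0 := by
  rcases Nat.eq_zero_or_pos m with rfl | hm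
  · have := h.2
    simp only [zero_add, pow_one] at this
    omega
  · exact (h.1 0 hm).ge

theorem AltLe.apply_zero_le (h : AltLe u v) : v 0 ≤ u 0 := by
  rcases h with ⟨m, hm⟩ | rfl
  exacts [AltLtAt.apply_zero_le (m := m) hm, le_rfl]

end AltOrder

theorem le_zero_of_forall_le_mul {α : Type*} {e : α → ℝ} {C q : ℝ} (hq₀ : 0 ≤ q) (hq : q < 1)
    (hC : ∀ a, e a ≤ C) (hstep : ∀ t ≥ 0, (∀ a, e a ≤ t) → ∀ a, e a ≤ q * t) (a : α) :
    e a ≤ 0 := by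
  have hpow : ∀ k : ℕ, ∀ a, e a ≤ max C 0 * q ^ k := by
    intro k
    induction k with
    | zero => simpa using fun a => (hC a).trans (le_max_left C 0)
    | succ k ih =>
      intro a
      calc e a ≤ q * (max C 0 * q ^ k) := hstep _ (by positivity) ih a
        _ = max C 0 * q ^ (k + 1) := by ring
  have hlim : Tendsto (fun k : ℕ => max C 0 * q ^ k) atTop (𝓝 0) := by
    simpa using (tendsto_pow_atTop_nhds_zero_of_lt_one hq₀ hq).const_mul (max C 0)
  exact ge_of_tendsto' hlim fun k => hpow k a

theorem sign_mul_floor_sub_pos {a b : ℝ} {s : ℤ} (hs : s = 1 ∨ s = -1) (h : 0 < s * (b - a))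
    (hne : ⌊a⌋ ≠ ⌊b⌋) : 0 < s * (⌊b⌋ - ⌊a⌋) := by
  rcases hs with rfl | rfl
  · have := Int.floor_le_floor (show a ≤ b by push_cast at h; linarith)
    omega
  · have := Int.floor_le_floor (show b ≤ a by push_cast at h; linarith)
    omega

theorem abs_sub_le_of_mem_Ico_of_mem_Icc {a b l t : ℝ} (ha : a ∈ Ico l (l + 1))
    (hb : b ∈ Icc (l - t) (l + 1 + t)) : |a - b| ≤ 1 + t :=
  abs_le.2 ⟨by linarith [ha.1, hb.2], by linarith [ha.2, hb.1]⟩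

theorem inv_pow_succ_mul_le {β t : ℝ} (hβ : 1 < β) (ht : 0 ≤ t) (m : ℕ) :
    β⁻¹ ^ (m + 1) * t ≤ β⁻¹ * t :=
  mul_le_mul_of_nonneg_right
    (pow_le_of_le_one (by positivity) (inv_le_one_of_one_le₀ hβ.le) m.succ_ne_zero) ht

section Dynamics

variable {β l : ℝ}

theorem negBetaT_mem (x : ℝ) : negBetaT β l x ∈ Ico l (l + 1) := by
  unfold negBetaT
  constructor <;> linarith [Int.floor_le (-β * x - l), Int.lt_floor_add_one (-β * x - l)]

theorem iterate_negBetaT_mem {x : ℝ} (hx : x ∈ Ico l (l + 1)) :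
    ∀ n, (negBetaT β l)^[n] x ∈ Ico l (l + 1)
  | 0 => hx
  | n + 1 => by rw [Function.iterate_succ_apply']; exact negBetaT_mem _

theorem negBetaDigit_add (x : ℝ) (i k : ℕ) :
    negBetaDigit β l x (k + i) = negBetaDigit β l ((negBetaT β l)^[i] x) k := by
  rw [negBetaDigit, Function.iterate_add_apply, negBetaDigit]

theorem abs_negBetaDigit_le (hβ : 0 ≤ β) (hl₁ : -1 < l) (hl₂ : l ≤ 0) {x : ℝ}
    (hx : x ∈ Ico l (l + 1)) (i : ℕ) : |(negBetaDigit β l x i : ℝ)| ≤ β + 1 := by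
  obtain ⟨hy₁, hy₂⟩ := iterate_negBetaT_mem (β := β) hx i
  have h₁ := Int.floor_le (-β * (negBetaT β l)^[i] x - l)
  have h₂ := Int.lt_floor_add_one (-β * (negBetaT β l)^[i] x - l)
  rw [negBetaDigit, abs_le]
  constructor <;> nlinarith

theorem iterate_negBetaT_sub_iterate {x y : ℝ} {n : ℕ}
    (h : ∀ k < n, negBetaDigit β l x k = negBetaDigit β l y k) :
    (negBetaT β l)^[n] y - (negBetaT β l)^[n] x = (-β) ^ n * (y - x) := by
  induction n with
  | zero => simp
  | succ n ih =>
    rw [Function.iterate_succ_apply', Function.iterate_succ_apply', pow_succ',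
      mul_assoc, ← ih fun k hk => h k (by omega)]
    change -β * _ - negBetaDigit β l y n - (-β * _ - negBetaDigit β l x n) = _
    rw [h n n.lt_succ_self]
    ring

theorem negBetaDigit_eq_of_orbit {xs : ℕ → ℤ} {Y : ℕ → ℝ} (hY : ∀ n, Y (n + 1) ∈ Ico l (l + 1))
    (hrec : ∀ n, -β * Y n = xs n + Y (n + 1)) : negBetaDigit β l (Y 0) = xs := by
  have hfloor (n : ℕ) : ⌊-β * Y n - l⌋ = xs n := by
    rw [hrec n, show (xs n : ℝ) + Y (n + 1) - l = (Y (n + 1) - l) + xs n by ring,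
      Int.floor_add_intCast,
      Int.floor_eq_zero_iff.2 ⟨by linarith [(hY n).1], by linarith [(hY n).2]⟩, zero_add]
  have horbit (n : ℕ) : (negBetaT β l)^[n] (Y 0) = Y n := by
    induction n with
    | zero => rfl
    | succ n ih =>
      rw [Function.iterate_succ_apply', ih, negBetaT, hfloor n]
      linarith [hrec n]
  funext n
  rw [negBetaDigit, horbit n, hfloor n]

end Dynamics

noncomputable def negBetaValue (β : ℝ) (w : ℕ → ℤ) : ℝ := ∑' j, (w j : ℝ) * (-β⁻¹) ^ (j + 1)

section Value

variable {β B : ℝ} {u v w : ℕ → ℤ}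

theorem hasSum_mul_inv_pow_succ (hβ : 1 < β) :
    HasSum (fun j : ℕ => B * β⁻¹ ^ (j + 1)) (B / (β - 1)) := by
  have hsum := (hasSum_geometric_of_lt_one (by positivity) (inv_lt_one_of_one_lt₀ hβ)).mul_left
    (B * β⁻¹)
  have hβ₁ : β - 1 ≠ 0 := by linarith
  simp_rw [pow_succ', ← mul_assoc]
  rwa [show B * β⁻¹ * (1 - β⁻¹)⁻¹ = B / (β - 1) by field_simp] at hsum

theorem norm_negBetaValue_term_le (hβ : 1 < β) (hw : ∀ j, |(w j : ℝ)| ≤ B) (j : ℕ) :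
    ‖(w j : ℝ) * (-β⁻¹) ^ (j + 1)‖ ≤ B * β⁻¹ ^ (j + 1) := by
  rw [Real.norm_eq_abs, abs_mul, abs_pow, abs_neg, abs_inv, abs_of_pos (by linarith : 0 < β)]
  exact mul_le_mul_of_nonneg_right (hw j) (by positivity)

theorem summable_negBetaValue (hβ : 1 < β) (hw : ∀ j, |(w j : ℝ)| ≤ B) :
    Summable fun j => (w j : ℝ) * (-β⁻¹) ^ (j + 1) :=
  .of_norm_bounded (hasSum_mul_inv_pow_succ hβ).summable (norm_negBetaValue_term_le hβ hw)

theorem abs_negBetaValue_le (hβ : 1 < β) (hw : ∀ j, |(w j : ℝ)| ≤ B) :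
    |negBetaValue β w| ≤ B / (β - 1) :=
  tsum_of_norm_bounded (hasSum_mul_inv_pow_succ hβ) (norm_negBetaValue_term_le hβ hw)

theorem negBetaValue_eq_sum_add (hβ : 1 < β) (hw : ∀ j, |(w j : ℝ)| ≤ B) (m : ℕ) :
    negBetaValue β w = ∑ j ∈ Finset.range m, (w j : ℝ) * (-β⁻¹) ^ (j + 1) +
      (-β⁻¹) ^ m * negBetaValue β (fun k => w (k + m)) := by
  rw [negBetaValue, ← (summable_negBetaValue hβ hw).sum_add_tsum_nat_add m, negBetaValue,
    ← tsum_mul_left]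
  congr 2
  funext k
  ring

theorem neg_mul_negBetaValue (hβ : 1 < β) (hw : ∀ j, |(w j : ℝ)| ≤ B) :
    -β * negBetaValue β w = w 0 + negBetaValue β (fun k => w (k + 1)) := by
  have hββ : -β * -β⁻¹ = 1 := by field_simp
  rw [negBetaValue_eq_sum_add hβ hw 1, Finset.sum_range_one, zero_add, pow_one]
  linear_combination ((w 0 : ℝ) + negBetaValue β fun k => w (k + 1)) * hββ

theorem negBetaValue_sub_negBetaValue (hβ : 1 < β) (hu : ∀ j, |(u j : ℝ)| ≤ B)
    (hv : ∀ j, |(v j : ℝ)| ≤ B) {m : ℕ} (hagree : ∀ k < m, u k = v k) :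
    negBetaValue β v - negBetaValue β u = (-β⁻¹) ^ (m + 1) * ((v m - u m : ℝ) +
      (negBetaValue β (fun k => v (k + (m + 1))) - negBetaValue β (fun k => u (k + (m + 1))))) := by
  have hprefix : ∑ j ∈ Finset.range m, (u j : ℝ) * (-β⁻¹) ^ (j + 1) =
      ∑ j ∈ Finset.range m, (v j : ℝ) * (-β⁻¹) ^ (j + 1) :=
    Finset.sum_congr rfl fun j hj => by rw [hagree j (Finset.mem_range.1 hj)]
  rw [negBetaValue_eq_sum_add hβ hu (m + 1), negBetaValue_eq_sum_add hβ hv (m + 1),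
    Finset.sum_range_succ, Finset.sum_range_succ, hprefix]
  ring

theorem sub_negBetaValue_ge_of_altLtAt (hβ : 1 < β) (hu : ∀ j, |(u j : ℝ)| ≤ B)
    (hv : ∀ j, |(v j : ℝ)| ≤ B) {m : ℕ} (h : AltLtAt u v m) {c : ℝ}
    (hc : |negBetaValue β (fun k => v (k + (m + 1))) -
      negBetaValue β (fun k => u (k + (m + 1)))| ≤ c) :
    β⁻¹ ^ (m + 1) * (1 - c) ≤ negBetaValue β v - negBetaValue β u := by
  set s : ℝ := (-1) ^ (m + 1)
  set E := negBetaValue β (fun k => v (k + (m + 1))) - negBetaValue β (fun k => u (k + (m + 1)))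
  have hlead : 1 ≤ s * (v m - u m) := by
    have := h.2
    unfold s
    exact_mod_cast this
  have htail : -c ≤ s * E := by
    have hs : |s * E| = |E| := by simp [s, abs_mul]
    linarith [neg_abs_le (s * E)]
  rw [negBetaValue_sub_negBetaValue hβ hu hv h.1, neg_pow,
    show s * β⁻¹ ^ (m + 1) * ((v m - u m : ℝ) + E) = β⁻¹ ^ (m + 1) * (s * (v m - u m) + s * E)
      by ring]
  exact mul_le_mul_of_nonneg_left (by linarith) (by positivity)

end Value

section Expansion

variable {β l : ℝ} (hβ : 1 < β) (hl₁ : -1 < l) (hl₂ : l ≤ 0)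
include hβ hl₁ hl₂

theorem negBetaValue_negBetaDigit {x : ℝ} (hx : x ∈ Ico l (l + 1)) :
    negBetaValue β (negBetaDigit β l x) = x := by
  have hdig {y : ℝ} (hy : y ∈ Ico l (l + 1)) := abs_negBetaDigit_le (by positivity) hl₁ hl₂ hy
  let e : Ico l (l + 1) → ℝ := fun y => |negBetaValue β (negBetaDigit β l y) - y|
  suffices e ⟨x, hx⟩ ≤ 0 by simpa [e, sub_eq_zero] using this
  refine le_zero_of_forall_le_mul (C := (β + 1) / (β - 1) + 1) (by positivity)
    (inv_lt_one_of_one_lt₀ hβ) (fun ⟨y, hy⟩ => ?_) (fun t _ ht ⟨y, hy⟩ => ?_) _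
  · have := abs_negBetaValue_le hβ (hdig hy)
    have : |y| ≤ 1 := abs_le.2 ⟨by linarith [hy.1], by linarith [hy.2]⟩
    exact (abs_sub _ _).trans (by linarith)
  · have hT : negBetaT β l y = -β * y - negBetaDigit β l y 0 := rfl
    have hrec := neg_mul_negBetaValue hβ (hdig hy)
    simp only [negBetaDigit_add y 1, Function.iterate_one] at hrec
    have herr : negBetaValue β (negBetaDigit β l y) - y =
        -β⁻¹ * (negBetaValue β (negBetaDigit β l (negBetaT β l y)) - negBetaT β l y) := by
      field_simp
      linarith
    have := ht ⟨negBetaT β l y, negBetaT_mem y⟩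
    simp only [e, herr, abs_mul, abs_neg, abs_inv, abs_of_pos (by linarith : 0 < β)] at this ⊢
    exact mul_le_mul_of_nonneg_left this (by positivity)

theorem negBetaValue_negBetaDigit_add {y : ℝ} (hy : y ∈ Ico l (l + 1)) (n : ℕ) :
    negBetaValue β (fun k => negBetaDigit β l y (k + n)) = (negBetaT β l)^[n] y := by
  simp_rw [negBetaDigit_add]
  exact negBetaValue_negBetaDigit hβ hl₁ hl₂ (iterate_negBetaT_mem hy n)

theorem altLt_negBetaDigit {x y : ℝ} (hx : x ∈ Ico l (l + 1)) (hy : y ∈ Ico l (l + 1))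
    (hxy : x < y) : AltLt (negBetaDigit β l x) (negBetaDigit β l y) := by
  have hne : negBetaDigit β l x ≠ negBetaDigit β l y := fun h => hxy.ne <| by
    rw [← negBetaValue_negBetaDigit hβ hl₁ hl₂ hx, h, negBetaValue_negBetaDigit hβ hl₁ hl₂ hy]
  classical
  obtain hex := Function.ne_iff.1 hne
  set m := Nat.find hex
  have hagree : ∀ k < m, negBetaDigit β l x k = negBetaDigit β l y k :=
    fun k hk => not_not.1 (Nat.find_min hex hk)
  refine ⟨m, hagree, sign_mul_floor_sub_pos (neg_one_pow_eq_or ℤ _) ?_ (Nat.find_spec hex)⟩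
  have hsign : (-1 : ℝ) ^ (m + 1) * (-β) ^ (m + 1) = β ^ (m + 1) := by
    rw [← mul_pow]
    simp
  have hiter := iterate_negBetaT_sub_iterate hagree
  push_cast
  calc (0 : ℝ) < β ^ (m + 1) * (y - x) := mul_pos (by positivity) (by linarith)
    _ = _ := by rw [← hsign]; linear_combination (-(-1 : ℝ) ^ (m + 1) * (-β)) * hiter

theorem altLe_negBetaDigit {x y : ℝ} (hx : x ∈ Ico l (l + 1)) (hy : y ∈ Ico l (l + 1))
    (hxy : x ≤ y) : AltLe (negBetaDigit β l x) (negBetaDigit β l y) := by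
  rcases hxy.lt_or_eq with hlt | rfl
  exacts [.inl (altLt_negBetaDigit hβ hl₁ hl₂ hx hy hlt), .inr rfl]

end Expansion

/-- `d` is the sequence `d*(l + 1)`, the digitwise limit of `d(l + 1 - ε)` as `ε → 0⁺`. -/
def IsLeftLimitDigits (β l : ℝ) (d : ℕ → ℤ) : Prop :=
  ∀ i : ℕ, ∃ ε₀ > 0, ∀ ε : ℝ, 0 < ε → ε < ε₀ → negBetaDigit β l (l + 1 - ε) i = d i

namespace IsLeftLimitDigits

variable {β l : ℝ} {d : ℕ → ℤ}

theorem eventually_eq (hd : IsLeftLimitDigits β l d) (m : ℕ) :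
    ∀ᶠ ε in 𝓝[>] (0 : ℝ), ∀ i ≤ m, negBetaDigit β l (l + 1 - ε) i = d i := by
  have hall : ∀ i ∈ Iic m, ∀ᶠ ε in 𝓝[>] (0 : ℝ), negBetaDigit β l (l + 1 - ε) i = d i := by
    intro i _
    obtain ⟨ε₀, hε₀, h⟩ := hd i
    exact mem_nhdsGT_iff_exists_Ioo_subset.2 ⟨ε₀, hε₀, fun ε hε => h ε hε.1 hε.2⟩
  filter_upwards [(finite_Iic m).eventually_all.2 hall] with ε hε using hε

theorem negBetaDigit_altLt (hd : IsLeftLimitDigits β l d) (hβ : 1 < β) (hl₁ : -1 < l)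
    (hl₂ : l ≤ 0) {x : ℝ} (hx : x ∈ Ico l (l + 1)) : AltLt (negBetaDigit β l x) d := by
  obtain ⟨hx₁, hx₂⟩ := hx
  set y := (x + (l + 1)) / 2 with hy_def
  have hy : y ∈ Ico l (l + 1) := ⟨by linarith, by linarith⟩
  obtain ⟨m, hm⟩ := altLt_negBetaDigit hβ hl₁ hl₂ ⟨hx₁, hx₂⟩ hy (by linarith)
  obtain ⟨ε, hagree, hε₀, hε⟩ :=
    ((hd.eventually_eq m).and (Ioo_mem_nhdsGT (by linarith : (0 : ℝ) < l + 1 - y))).exists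
  have hw : l + 1 - ε ∈ Ico l (l + 1) := ⟨by linarith, by linarith⟩
  obtain ⟨n, hn⟩ := altLt_negBetaDigit hβ hl₁ hl₂ hy hw (by linarith)
  exact ⟨_, AltLtAt.congr_right (AltLtAt.trans hm hn)
    fun k hk => hagree k (hk.trans (min_le_left m n))⟩

theorem exists_altLt_negBetaDigit (hd : IsLeftLimitDigits β l d) {u : ℕ → ℤ} (hu : AltLt u d) :
    ∃ y ∈ Ico l (l + 1), AltLt u (negBetaDigit β l y) := by
  obtain ⟨m, hm⟩ := hu
  obtain ⟨ε, hagree, hε₀, hε⟩ := ((hd.eventually_eq m).and (Ioo_mem_nhdsGT one_pos)).exists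
  exact ⟨l + 1 - ε, ⟨by linarith, by linarith⟩, m,
    AltLtAt.congr_right hm fun k hk => (hagree k hk).symm⟩

end IsLeftLimitDigits

section Admissible

variable {β l : ℝ} (hβ : 1 < β) (hl₁ : -1 < l) (hl₂ : l ≤ 0) {xs : ℕ → ℤ}
  (h : ∀ n, AltLe (negBetaDigit β l l) (fun k => xs (k + n)) ∧
    ∃ y ∈ Ico l (l + 1), AltLt (fun k => xs (k + n)) (negBetaDigit β l y))
include hβ hl₁ hl₂ h

theorem abs_le_of_altLe_of_altLt (j : ℕ) : |(xs j : ℝ)| ≤ β + 1 := by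
  obtain ⟨hlow, y, hy, m, hm⟩ := h j
  have h₁ : (xs j : ℝ) ≤ negBetaDigit β l l 0 := by
    exact_mod_cast (by simpa using AltLe.apply_zero_le hlow : xs j ≤ negBetaDigit β l l 0)
  have h₂ : (negBetaDigit β l y 0 : ℝ) ≤ xs j := by
    exact_mod_cast (by simpa using AltLtAt.apply_zero_le hm : negBetaDigit β l y 0 ≤ xs j)
  have hdig {y : ℝ} (hy : y ∈ Ico l (l + 1)) :=
    abs_le.1 (abs_negBetaDigit_le (by positivity) hl₁ hl₂ hy 0)
  rw [abs_le]
  constructor <;> linarith [hdig hy, hdig (⟨le_rfl, by linarith⟩ : l ∈ Ico l (l + 1))]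

variable {t : ℝ} (ht : 0 ≤ t)
  (hbound : ∀ n, negBetaValue β (fun k => xs (k + n)) ∈ Icc (l - t) (l + 1 + t))
include ht hbound

theorem le_negBetaValue_of_altLe_of_altLt (n : ℕ) :
    l - β⁻¹ * t ≤ negBetaValue β (fun k => xs (k + n)) := by
  have hl : l ∈ Ico l (l + 1) := ⟨le_rfl, by linarith⟩
  rcases (h n).1 with ⟨m, hm⟩ | heq
  · have key := sub_negBetaValue_ge_of_altLtAt hβ (abs_negBetaDigit_le (by positivity) hl₁ hl₂ hl)
      (fun j => abs_le_of_altLe_of_altLt hβ hl₁ hl₂ h (j + n)) hm (c := 1 + t) (by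
        rw [negBetaValue_negBetaDigit_add hβ hl₁ hl₂ hl, abs_sub_comm]
        refine abs_sub_le_of_mem_Ico_of_mem_Icc (iterate_negBetaT_mem hl (m + 1)) ?_
        simpa only [add_assoc, add_comm (m + 1) n] using hbound (n + (m + 1)))
    rw [negBetaValue_negBetaDigit hβ hl₁ hl₂ hl] at key
    linarith [inv_pow_succ_mul_le hβ ht m]
  · rw [← heq, negBetaValue_negBetaDigit hβ hl₁ hl₂ hl]
    linarith [show 0 ≤ β⁻¹ * t by positivity]

theorem exists_negBetaValue_le_of_altLe_of_altLt (n : ℕ) :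
    ∃ y < l + 1, negBetaValue β (fun k => xs (k + n)) ≤ y + β⁻¹ * t := by
  obtain ⟨-, y, hy, m, hm⟩ := h n
  have key := sub_negBetaValue_ge_of_altLtAt hβ
    (fun j => abs_le_of_altLe_of_altLt hβ hl₁ hl₂ h (j + n))
    (abs_negBetaDigit_le (by positivity) hl₁ hl₂ hy) hm (c := 1 + t) (by
      rw [negBetaValue_negBetaDigit_add hβ hl₁ hl₂ hy]
      refine abs_sub_le_of_mem_Ico_of_mem_Icc (iterate_negBetaT_mem hy (m + 1)) ?_
      simpa only [add_assoc, add_comm (m + 1) n] using hbound (n + (m + 1)))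
  rw [negBetaValue_negBetaDigit hβ hl₁ hl₂ hy] at key
  exact ⟨y, hy.2, by linarith [inv_pow_succ_mul_le hβ ht m]⟩

omit ht hbound

theorem negBetaValue_mem_Ico_of_altLe_of_altLt (n : ℕ) :
    negBetaValue β (fun k => xs (k + n)) ∈ Ico l (l + 1) := by
  set Y : ℕ → ℝ := fun n => negBetaValue β (fun k => xs (k + n))
  have hC (n : ℕ) : max (l - Y n) (Y n - (l + 1)) ≤ (β + 1) / (β - 1) := by
    have := abs_le.1 <|
      abs_negBetaValue_le hβ fun j => abs_le_of_altLe_of_altLt hβ hl₁ hl₂ h (j + n)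
    exact max_le (by linarith) (by linarith)
  have hstep (t : ℝ) (ht : 0 ≤ t) (he : ∀ n, max (l - Y n) (Y n - (l + 1)) ≤ t) (n : ℕ) :
      max (l - Y n) (Y n - (l + 1)) ≤ β⁻¹ * t := by
    have hbound (j : ℕ) : Y j ∈ Icc (l - t) (l + 1 + t) := by
      have := max_le_iff.1 (he j)
      constructor <;> linarith
    obtain ⟨y, hy, hYy⟩ := exists_negBetaValue_le_of_altLe_of_altLt hβ hl₁ hl₂ h ht hbound n
    exact max_le (by linarith [le_negBetaValue_of_altLe_of_altLt hβ hl₁ hl₂ h ht hbound n])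
      (by linarith)
  have hIcc (j : ℕ) : Y j ∈ Icc (l - 0) (l + 1 + 0) := by
    have := max_le_iff.1 <|
      le_zero_of_forall_le_mul (by positivity) (inv_lt_one_of_one_lt₀ hβ) hC hstep j
    constructor <;> linarith
  obtain ⟨y, hy, hYy⟩ := exists_negBetaValue_le_of_altLe_of_altLt hβ hl₁ hl₂ h le_rfl hIcc n
  exact ⟨by linarith [(hIcc n).1], by linarith⟩

theorem exists_negBetaDigit_eq_of_altLe_of_altLt :
    ∃ x ∈ Ico l (l + 1), negBetaDigit β l x = xs := by
  have hxs := abs_le_of_altLe_of_altLt hβ hl₁ hl₂ h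
  have hmem := negBetaValue_mem_Ico_of_altLe_of_altLt hβ hl₁ hl₂ h
  have hrec (n : ℕ) : -β * negBetaValue β (fun k => xs (k + n)) =
      xs n + negBetaValue β (fun k => xs (k + (n + 1))) := by
    simpa only [zero_add, add_assoc, add_comm 1 n] using
      neg_mul_negBetaValue hβ (fun j => hxs (j + n))
  exact ⟨_, hmem 0, negBetaDigit_eq_of_orbit (fun n => hmem (n + 1)) hrec⟩

end Admissible

end NegBeta

open NegBeta in
theorem stmt_12 (β l : ℝ) (hβ : 1 < β) (hl₁ : -1 < l) (hl₂ : l ≤ 0)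
    (rstr : ℕ → ℤ)
    (hrstr : ∀ i : ℕ, ∃ ε₀ > 0, ∀ ε : ℝ, 0 < ε → ε < ε₀ →
      negBetaDigit β l (l + 1 - ε) i = rstr i)
    (xs : ℕ → ℤ) :
    (∃ x ∈ Set.Ico l (l + 1), ∀ i : ℕ, negBetaDigit β l x i = xs i) ↔
      ∀ i : ℕ, AltLe (negBetaDigit β l l) (fun k => xs (i + k)) ∧
        AltLt (fun k => xs (i + k)) rstr := by
  have hr : IsLeftLimitDigits β l rstr := hrstr
  have hshift (i : ℕ) : (fun k => xs (i + k)) = fun k => xs (k + i) := by simp only [add_comm]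
  simp only [hshift]
  constructor
  · rintro ⟨x, hx, hxs⟩ i
    have hTx := iterate_negBetaT_mem (β := β) hx i
    rw [show (fun k => xs (k + i)) = negBetaDigit β l ((negBetaT β l)^[i] x) from
      funext fun k => by rw [← hxs, negBetaDigit_add]]
    exact ⟨altLe_negBetaDigit hβ hl₁ hl₂ ⟨le_rfl, by linarith⟩ hTx hTx.1,
      hr.negBetaDigit_altLt hβ hl₁ hl₂ hTx⟩
  · intro h
    obtain ⟨x, hx, hdigits⟩ := exists_negBetaDigit_eq_of_altLe_of_altLt hβ hl₁ hl₂
      fun n => ⟨(h n).1, hr.exists_altLt_negBetaDigit (h n).2⟩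
    exact ⟨x, hx, fun i => by rw [hdigits]⟩
end

section
/- If w is a finite block of digits of odd length such that ww is a prefix of d(l), then d(l) = w^ω (the infinite repetition of w). -/
open Function

section NegBeta

variable {β l : ℝ}

lemma le_negBetaT (x : ℝ) : l ≤ negBetaT β l x := by
  have := Int.floor_le (-β * x - l)
  unfold negBetaT
  linarith

lemma le_iterate_negBetaT {n : ℕ} (hn : n ≠ 0) (x : ℝ) : l ≤ (negBetaT β l)^[n] x := by
  obtain ⟨m, rfl⟩ := Nat.exists_eq_succ_of_ne_zero hn
  rw [iterate_succ_apply']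
  exact le_negBetaT _

lemma iterate_negBetaT_succ (x : ℝ) (i : ℕ) :
    (negBetaT β l)^[i + 1] x = -β * (negBetaT β l)^[i] x - negBetaDigit β l x i := by
  rw [iterate_succ_apply']
  rfl

lemma negBetaDigit_iterate (x : ℝ) (m i : ℕ) :
    negBetaDigit β l ((negBetaT β l)^[m] x) i = negBetaDigit β l x (m + i) := by
  rw [negBetaDigit, negBetaDigit, ← iterate_add_apply, Nat.add_comm]

lemma iterate_negBetaT_sub_of_digits_eq {x y : ℝ} {m : ℕ}
    (h : ∀ i < m, negBetaDigit β l x i = negBetaDigit β l y i) :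
    (negBetaT β l)^[m] x - (negBetaT β l)^[m] y = (-β) ^ m * (x - y) := by
  induction m with
  | zero => simp
  | succ m ih =>
    rw [iterate_negBetaT_succ, iterate_negBetaT_succ, h m m.lt_succ_self, pow_succ]
    linear_combination (-β) * ih fun i hi => h i (Nat.lt_succ_of_lt hi)

/-- Only the left endpoint `l` has this rigidity: it is the least value of `T`. -/
lemma isPeriodicPt_negBetaT_of_odd (hβ : 1 < β) {n : ℕ} (hn : Odd n)
    (h : ∀ i < n, negBetaDigit β l l (n + i) = negBetaDigit β l l i) :
    IsPeriodicPt (negBetaT β l) n l := by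
  set y := (negBetaT β l)^[n] l
  have hn0 : n ≠ 0 := hn.pos.ne'
  have hdiff : (negBetaT β l)^[n] y - y = -β ^ n * (y - l) := by
    rw [← hn.neg_pow]
    exact iterate_negBetaT_sub_of_digits_eq fun i hi => by rw [negBetaDigit_iterate, h i hi]
  have hy : l ≤ y := le_iterate_negBetaT hn0 l
  have hTy : l ≤ (negBetaT β l)^[n] y := le_iterate_negBetaT hn0 y
  have hβn : 1 < β ^ n := one_lt_pow₀ hβ hn0
  show y = l
  nlinarith

lemma negBetaDigit_mod_of_isPeriodicPt {x : ℝ} {n : ℕ}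
    (hx : IsPeriodicPt (negBetaT β l) n x) (k : ℕ) :
    negBetaDigit β l x k = negBetaDigit β l x (k % n) := by
  rw [negBetaDigit, negBetaDigit, hx.iterate_mod_apply]

end NegBeta

theorem stmt_14_general (β l : ℝ) (hβ : 1 < β)
    (w : List ℤ) (hodd : Odd w.length)
    (hpref : ∀ k < 2 * w.length, negBetaDigit β l l k = (w ++ w).getD k 0) :
    ∀ k : ℕ, negBetaDigit β l l k = w.getD (k % w.length) 0 := by
  have hpos := hodd.pos
  have hperiodic : IsPeriodicPt (negBetaT β l) w.length l := by
    refine isPeriodicPt_negBetaT_of_odd hβ hodd fun i hi => ?_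
    rw [hpref _ (by omega), hpref _ (by omega), List.getD_append_right _ _ _ _ (by omega),
      List.getD_append _ _ _ _ hi, Nat.add_sub_cancel_left]
  intro k
  have hk := Nat.mod_lt k hpos
  rw [negBetaDigit_mod_of_isPeriodicPt hperiodic, hpref _ (by omega),
    List.getD_append _ _ _ _ hk]

theorem stmt_14 (β l : ℝ) (hβ : 1 < β) (hl₁ : -1 < l) (hl₂ : l ≤ 0)
    (w : List ℤ) (hw : w ≠ []) (hodd : Odd w.length)
    (hpref : ∀ k < 2 * w.length, negBetaDigit β l l k = (w ++ w).getD k 0) :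
    ∀ k : ℕ, negBetaDigit β l l k = w.getD (k % w.length) 0 :=
  stmt_14_general β l hβ w hodd hpref
end

section
/- If T^q(l) ≠ l for all q ∈ ℕ (or equality T^q(l) = l occurs only for even q), then d*(l) := lim_{ε→0+} d(l+ε) equals d(l); whereas if T^q(l) = l for some odd q (minimal), so that d(l) = (l_1 ⋯ l_q)^ω, then d*(l) = l_1 ⋯ l_{q-1} (l_q - 1) followed by d*(r). -/
/-!
For small `ε > 0` the orbit of `l + ε` follows that of `l` affinely,
`T^i (l + ε) = T^i l + (-β)^i ε`, as long as the digits agree. The `i`-th digit is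
`⌊c + (-β)^(i+1) ε⌋` with `c = -β T^i l - l`; since `⌊·⌋` is right-continuous it can only
change when `(-β)^(i+1) < 0` and `c ∈ ℤ`, i.e. when `i + 1` is odd and `T^(i+1) l = l`.
At the first such return `q` the digit drops by one and `T^q (l + ε) = r - β^q ε`, so the
remaining digits are those of points tending to `r` from the left, which is `d*(r)`.
-/

open Filter Topology

lemma tendsto_add_mul_nhdsGT_zero (c a : ℝ) :
    Tendsto (fun ε => c + a * ε) (𝓝[>] 0) (𝓝 c) :=
  ((continuous_const.add (continuous_const.mul continuous_id)).tendsto' 0 c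
    (by simp)).mono_left nhdsWithin_le_nhds

lemma Int.eventually_floor_add_mul_eq {c a : ℝ} (ha : a < 0 → Int.fract c ≠ 0) :
    ∀ᶠ ε in 𝓝[>] 0, ⌊c + a * ε⌋ = ⌊c⌋ := by
  have hlim := tendsto_add_mul_nhdsGT_zero c a
  have hlower : ∀ᶠ ε in 𝓝[>] 0, (⌊c⌋ : ℝ) ≤ c + a * ε := by
    rcases lt_or_ge a 0 with hneg | hnonneg
    · have hlt : (⌊c⌋ : ℝ) < c := (Int.floor_le c).lt_of_ne fun h =>
        ha hneg (by rw [← Int.self_sub_floor, h, sub_self])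
      exact (hlim.eventually (eventually_gt_nhds hlt)).mono fun _ => le_of_lt
    · filter_upwards [self_mem_nhdsWithin] with ε (hε : 0 < ε)
      nlinarith [Int.floor_le c]
  filter_upwards [hlower, hlim.eventually (eventually_lt_nhds (Int.lt_floor_add_one c))]
    with ε h₁ h₂ using Int.floor_eq_iff.2 ⟨h₁, h₂⟩

lemma Int.eventually_floor_add_mul_eq_sub_one {c a : ℝ} (ha : a < 0) (hc : Int.fract c = 0) :
    ∀ᶠ ε in 𝓝[>] 0, ⌊c + a * ε⌋ = ⌊c⌋ - 1 := by
  have hfloor : (⌊c⌋ : ℝ) = c := by linarith [Int.self_sub_floor c]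
  filter_upwards [self_mem_nhdsWithin,
    (tendsto_add_mul_nhdsGT_zero c a).eventually (eventually_gt_nhds (sub_one_lt c))]
    with ε (hε : 0 < ε) h₁
  rw [Int.floor_eq_iff]
  push_cast
  constructor <;> nlinarith

lemma Filter.eq_of_eventually_eq {α γ : Type*} {f : Filter α} [f.NeBot] {g : α → γ} {a b : γ}
    (ha : ∀ᶠ x in f, g x = a) (hb : ∀ᶠ x in f, g x = b) : a = b :=
  eventually_const.1 ((ha.and hb).mono fun _ h => h.1.symm.trans h.2)

lemma Filter.eventually_nhdsGT_of_forall_lt {a ε₀ : ℝ} (hε₀ : a < ε₀) {p : ℝ → Prop}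
    (h : ∀ ε, a < ε → ε < ε₀ → p ε) : ∀ᶠ ε in 𝓝[>] a, p ε := by
  filter_upwards [Ioo_mem_nhdsGT hε₀] with ε hε using h ε hε.1 hε.2

section NegBeta

variable {β l : ℝ}

lemma negBetaT_sub_eq_fract (x : ℝ) : negBetaT β l x - l = Int.fract (-β * x - l) := by
  rw [negBetaT, Int.fract]; ring

lemma negBetaT_add_of_floor_eq_sub {x δ : ℝ} {k : ℤ}
    (h : ⌊-β * (x + δ) - l⌋ = ⌊-β * x - l⌋ - k) :
    negBetaT β l (x + δ) = negBetaT β l x - β * δ + k := by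
  rw [negBetaT, negBetaT, h]; push_cast; ring

lemma negBetaDigit_add (x : ℝ) (q k : ℕ) :
    negBetaDigit β l x (q + k) = negBetaDigit β l ((negBetaT β l)^[q] x) k := by
  rw [negBetaDigit, negBetaDigit, add_comm, Function.iterate_add_apply]

lemma eventually_floor_negBeta_add_mul_eq {x s : ℝ} (h : 0 < β * s → negBetaT β l x ≠ l) :
    ∀ᶠ ε in 𝓝[>] 0, ⌊-β * (x + s * ε) - l⌋ = ⌊-β * x - l⌋ := by
  have hfloor := Int.eventually_floor_add_mul_eq (c := -β * x - l) (a := -β * s)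
    fun hneg hfract => h (by linarith) (by linarith [negBetaT_sub_eq_fract (β := β) (l := l) x])
  filter_upwards [hfloor] with ε hε
  convert hε using 3; ring

lemma eventually_floor_negBeta_add_mul_eq_sub_one {x s : ℝ} (hs : 0 < β * s)
    (hx : negBetaT β l x = l) :
    ∀ᶠ ε in 𝓝[>] 0, ⌊-β * (x + s * ε) - l⌋ = ⌊-β * x - l⌋ - 1 := by
  have hfloor := Int.eventually_floor_add_mul_eq_sub_one (c := -β * x - l) (a := -β * s)
    (by linarith) (by rw [← negBetaT_sub_eq_fract, hx, sub_self])
  filter_upwards [hfloor] with ε hε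
  convert hε using 3; ring

lemma negBetaT_iterate_ne_of_pos_mul_pow (hβ : 0 < β) {i : ℕ}
    (h : ∀ p, 0 < p → p ≤ i + 1 → (negBetaT β l)^[p] l = l → Even p)
    (hpos : 0 < β * (-β) ^ i) : negBetaT β l ((negBetaT β l)^[i] l) ≠ l := by
  intro hret
  have hi : Even i := by
    by_contra hodd
    have := (Odd.pow_neg_iff (Nat.not_even_iff_odd.1 hodd)).2 (neg_neg_of_pos hβ)
    nlinarith
  have := h (i + 1) i.succ_pos le_rfl (by rwa [Function.iterate_succ_apply'])
  exact Nat.not_even_iff_odd.2 hi.add_one this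

lemma eventually_iterate_negBetaT_add (hβ : 0 < β) {i : ℕ}
    (h : ∀ p, 0 < p → p ≤ i → (negBetaT β l)^[p] l = l → Even p) :
    ∀ᶠ ε in 𝓝[>] 0, (negBetaT β l)^[i] (l + ε) = (negBetaT β l)^[i] l + (-β) ^ i * ε := by
  induction i with
  | zero => simp
  | succ i ih =>
    filter_upwards [ih fun p hp hpi => h p hp (by omega),
      eventually_floor_negBeta_add_mul_eq (negBetaT_iterate_ne_of_pos_mul_pow hβ h)]
      with ε hε hfloor
    rw [Function.iterate_succ_apply', Function.iterate_succ_apply', hε,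
      negBetaT_add_of_floor_eq_sub (k := 0) (by simpa using hfloor)]
    push_cast; ring

lemma eventually_negBetaDigit_eq (hβ : 0 < β) {i : ℕ}
    (h : ∀ p, 0 < p → p ≤ i + 1 → (negBetaT β l)^[p] l = l → Even p) :
    ∀ᶠ ε in 𝓝[>] 0, negBetaDigit β l (l + ε) i = negBetaDigit β l l i := by
  filter_upwards [eventually_iterate_negBetaT_add (i := i) hβ fun p hp hpi => h p hp (by omega),
    eventually_floor_negBeta_add_mul_eq (negBetaT_iterate_ne_of_pos_mul_pow hβ h)]
    with ε hε hfloor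
  rw [negBetaDigit, negBetaDigit, hε, hfloor]

lemma eventually_negBetaDigit_eq_sub_one (hβ : 0 < β) {i : ℕ} (hi : Even i)
    (hret : (negBetaT β l)^[i + 1] l = l)
    (h : ∀ p, 0 < p → p ≤ i → (negBetaT β l)^[p] l = l → Even p) :
    ∀ᶠ ε in 𝓝[>] 0, negBetaDigit β l (l + ε) i = negBetaDigit β l l i - 1 := by
  have hpos : 0 < β * (-β) ^ i := mul_pos hβ (hi.pow_pos (neg_ne_zero.2 hβ.ne'))
  filter_upwards [eventually_iterate_negBetaT_add hβ h, eventually_floor_negBeta_add_mul_eq_sub_one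
    hpos (by rwa [← Function.iterate_succ_apply' (negBetaT β l)])] with ε hε hfloor
  rw [negBetaDigit, negBetaDigit, hε, hfloor]

lemma eventually_iterate_negBetaT_add_eq_add_one_sub (hβ : 0 < β) {i : ℕ} (hi : Even i)
    (hret : (negBetaT β l)^[i + 1] l = l)
    (h : ∀ p, 0 < p → p ≤ i → (negBetaT β l)^[p] l = l → Even p) :
    ∀ᶠ ε in 𝓝[>] 0, (negBetaT β l)^[i + 1] (l + ε) = l + 1 - β ^ (i + 1) * ε := by
  filter_upwards [eventually_iterate_negBetaT_add hβ h,
    eventually_negBetaDigit_eq_sub_one hβ hi hret h] with ε hε hdigit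
  rw [negBetaDigit, negBetaDigit, hε] at hdigit
  rw [Function.iterate_succ_apply', hε, negBetaT_add_of_floor_eq_sub (k := 1) (by exact_mod_cast hdigit),
    ← Function.iterate_succ_apply' (negBetaT β l), hret, hi.neg_pow]
  push_cast; ring

end NegBeta

theorem stmt_16_general (β l : ℝ) (hβ : 1 < β)
    (dstarl dstarr : ℕ → ℤ)
    -- `dstarl = lim_{ε→0+} d(l+ε)`
    (hdl : ∀ i : ℕ, ∃ ε₀ > 0, ∀ ε : ℝ, 0 < ε → ε < ε₀ →
      negBetaDigit β l (l + ε) i = dstarl i)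
    -- `dstarr = lim_{ε→0+} d(l+1-ε)`
    (hdr : ∀ i : ℕ, ∃ ε₀ > 0, ∀ ε : ℝ, 0 < ε → ε < ε₀ →
      negBetaDigit β l (l + 1 - ε) i = dstarr i) :
    -- if `T^q(l) = l` never happens for `q ≥ 1`, or happens only for even `q`,
    -- then `d*(l) = d(l)`
    ((∀ q : ℕ, 0 < q → (negBetaT β l)^[q] l = l → Even q) →
      dstarl = negBetaDigit β l l) ∧
    -- if the minimal `q ≥ 1` with `T^q(l) = l` is odd, then
    -- `d*(l) = l_1 ⋯ l_{q-1} (l_q - 1) d*(r)`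
    (∀ q : ℕ, 0 < q → Odd q → (negBetaT β l)^[q] l = l →
      (∀ p : ℕ, 0 < p → (negBetaT β l)^[p] l = l → q ≤ p) →
      (∀ k < q - 1, dstarl k = negBetaDigit β l l k) ∧
      dstarl (q - 1) = negBetaDigit β l l (q - 1) - 1 ∧
      (∀ k : ℕ, dstarl (q + k) = dstarr k)) := by
  have hβ₀ : 0 < β := zero_lt_one.trans hβ
  have hdl' : ∀ i, ∀ᶠ ε in 𝓝[>] 0, negBetaDigit β l (l + ε) i = dstarl i := fun i =>
    let ⟨_, hε₀, h⟩ := hdl i; eventually_nhdsGT_of_forall_lt hε₀ h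
  have hdr' : ∀ i, ∀ᶠ ε in 𝓝[>] 0, negBetaDigit β l (l + 1 - ε) i = dstarr i := fun i =>
    let ⟨_, hε₀, h⟩ := hdr i; eventually_nhdsGT_of_forall_lt hε₀ h
  refine ⟨fun hnever => funext fun i =>
    eq_of_eventually_eq (hdl' i) (eventually_negBetaDigit_eq hβ₀ fun p hp _ => hnever p hp), ?_⟩
  rintro q hq hodd hret hmin
  obtain ⟨i, rfl⟩ : ∃ i, q = i + 1 := ⟨q - 1, by omega⟩
  have hi : Even i := by simpa [Nat.odd_add_one] using hodd
  have hfirst : ∀ p, 0 < p → p ≤ i → (negBetaT β l)^[p] l = l → Even p :=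
    fun p hp hpi hp' => absurd (hmin p hp hp') (by omega)
  simp only [Nat.add_sub_cancel]
  refine ⟨fun k hk => eq_of_eventually_eq (hdl' k)
      (eventually_negBetaDigit_eq hβ₀ fun p hp hpk => hfirst p hp (by omega)),
    eq_of_eventually_eq (hdl' i) (eventually_negBetaDigit_eq_sub_one hβ₀ hi hret hfirst),
    fun k => eq_of_eventually_eq (hdl' (i + 1 + k)) ?_⟩
  filter_upwards [eventually_iterate_negBetaT_add_eq_add_one_sub hβ₀ hi hret hfirst,
    eventually_nhdsGT_zero_mul_left (pow_pos hβ₀ (i + 1)) (hdr' k)] with ε hε htail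
  rw [negBetaDigit_add, hε, htail]

theorem stmt_16 (β l : ℝ) (hβ : 1 < β) (hl₁ : -1 < l) (hl₂ : l ≤ 0)
    (dstarl dstarr : ℕ → ℤ)
    -- `dstarl = lim_{ε→0+} d(l+ε)`
    (hdl : ∀ i : ℕ, ∃ ε₀ > 0, ∀ ε : ℝ, 0 < ε → ε < ε₀ →
      negBetaDigit β l (l + ε) i = dstarl i)
    -- `dstarr = lim_{ε→0+} d(l+1-ε)`
    (hdr : ∀ i : ℕ, ∃ ε₀ > 0, ∀ ε : ℝ, 0 < ε → ε < ε₀ →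
      negBetaDigit β l (l + 1 - ε) i = dstarr i) :
    -- if `T^q(l) = l` never happens for `q ≥ 1`, or happens only for even `q`,
    -- then `d*(l) = d(l)`
    ((∀ q : ℕ, 0 < q → (negBetaT β l)^[q] l = l → Even q) →
      dstarl = negBetaDigit β l l) ∧
    -- if the minimal `q ≥ 1` with `T^q(l) = l` is odd, then
    -- `d*(l) = l_1 ⋯ l_{q-1} (l_q - 1) d*(r)`
    (∀ q : ℕ, 0 < q → Odd q → (negBetaT β l)^[q] l = l →
      (∀ p : ℕ, 0 < p → (negBetaT β l)^[p] l = l → q ≤ p) →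
      (∀ k < q - 1, dstarl k = negBetaDigit β l l k) ∧
      dstarl (q - 1) = negBetaDigit β l l (q - 1) - 1 ∧
      (∀ k : ℕ, dstarl (q + k) = dstarr k)) :=
  stmt_16_general β l hβ dstarl dstarr hdl hdr
end
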